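/- arXiv:1301.5044 — 3 statements merged into one kernel-verified Lean document; each statement's English description precedes it below -/
import Mathlib

section
/- For a > 0 and positive integer b, the integral ∫₀^∞ log₂(1+ax) d((1-e^{-x})^b) equals (b/ln 2) · Σ_{ℓ=0}^{b-1} C(b-1,ℓ) ((-1)^ℓ/(ℓ+1)) exp((ℓ+1)/a) E₁((ℓ+1)/a), where E₁(x) = ∫_x^∞ e^{-t}/t dt is the exponential integral. -/
/-!
The derivative of `(1 - e^{-x})^b` is `b (1 - e^{-x})^{b-1} e^{-x}`, which the binomial theorem
expands as `∑ ℓ, b C(b-1,ℓ) (-1)^ℓ e^{-(ℓ+1)x}`; so the integral is a combination of Laplace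
transforms of `log (1 + a x)`. Integration by parts turns `∫₀^∞ log (1 + a x) e^{-c x} dx` into
`(a/c) ∫₀^∞ e^{-c x} / (1 + a x) dx`, and the substitution `t = (c/a)(1 + a x)` identifies the
latter with `e^{c/a} E₁(c/a) / a`.
-/

open Real Finset MeasureTheory

/-- The exponential integral `E₁ x = ∫_x^∞ e^{-t}/t dt`. -/
noncomputable def E1 (x : ℝ) : ℝ := ∫ t in Set.Ioi x, Real.exp (-t) / t

open Filter Topology

theorem hasDerivAt_one_sub_exp_neg_pow (b : ℕ) (x : ℝ) :
    HasDerivAt (fun y : ℝ => (1 - exp (-y)) ^ b)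
      (∑ ℓ ∈ range b, (b : ℝ) * (b - 1).choose ℓ * (-1) ^ ℓ * exp (-((ℓ + 1) * x))) x := by
  cases b with
  | zero => simpa using hasDerivAt_const x (1 : ℝ)
  | succ n =>
    have h : HasDerivAt (fun y => 1 - exp (-y)) (exp (-x)) x := by
      simpa using ((hasDerivAt_neg x).exp).const_sub 1
    refine (h.pow (n + 1)).congr_deriv ?_
    rw [Nat.add_sub_cancel, sub_eq_neg_add, add_pow, mul_sum, sum_mul]
    refine sum_congr rfl fun ℓ _ => ?_
    have : exp (-((ℓ + 1) * x)) = exp (-x) ^ ℓ * exp (-x) := by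
      rw [← exp_nat_mul, ← exp_add]; ring_nf
    rw [this, neg_pow]
    push_cast
    ring

theorem integral_comp_add_mul_Ioi {E : Type*} [NormedAddCommGroup E] [NormedSpace ℝ E]
    (g : ℝ → E) (s : ℝ) {c : ℝ} (hc : 0 < c) :
    ∫ x in Set.Ioi 0, g (s + c * x) = c⁻¹ • ∫ t in Set.Ioi s, g t := by
  have shift := (measurePreserving_add_left volume s).setIntegral_preimage_emb
    (measurableEmbedding_addLeft s) g (Set.Ioi s)
  rw [Set.preimage_const_add_Ioi, sub_self] at shift
  simpa [shift] using integral_comp_mul_left_Ioi (fun y => g (s + y)) 0 hc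

theorem integral_exp_neg_mul_div_one_add_mul {a c : ℝ} (ha : a ≠ 0) (hc : 0 < c) :
    ∫ x in Set.Ioi 0, exp (-(c * x)) / (1 + a * x) = exp (c / a) * E1 (c / a) / a := by
  have hpt : ∀ x, exp (-(c * x)) / (1 + a * x)
      = c / a * exp (c / a) * (exp (-(c / a + c * x)) / (c / a + c * x)) := by
    intro x
    have : c / a + c * x = c / a * (1 + a * x) := by field_simp
    rw [neg_add, exp_add, exp_neg (c / a), this]
    field_simp
  simp_rw [hpt, integral_const_mul, integral_comp_add_mul_Ioi (fun t => exp (-t) / t) _ hc, E1,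
    smul_eq_mul]
  field_simp

section LogLaplace

variable {a c : ℝ}

theorem log_one_add_mul_mem_Icc (ha : 0 ≤ a) {x : ℝ} (hx : 0 ≤ x) :
    log (1 + a * x) ∈ Set.Icc 0 (a * x) := by
  have hax : 0 ≤ a * x := mul_nonneg ha hx
  refine ⟨log_nonneg (by linarith), ?_⟩
  linarith [log_le_sub_one_of_pos (by linarith : 0 < 1 + a * x)]

theorem integrableOn_exp_neg_mul_div_one_add_mul (ha : 0 ≤ a) (hc : 0 < c) :
    IntegrableOn (fun x => exp (-(c * x)) / (1 + a * x)) (Set.Ioi 0) := by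
  have hdom : IntegrableOn (fun x => exp (-(c * x))) (Set.Ioi 0) := by
    simpa using exp_neg_integrableOn_Ioi 0 hc
  refine Integrable.mono' hdom
    (by fun_prop : Measurable fun x => exp (-(c * x)) / (1 + a * x)).aestronglyMeasurable ?_
  filter_upwards [ae_restrict_mem measurableSet_Ioi] with x (hx : 0 < x)
  rw [norm_of_nonneg (by positivity)]
  exact div_le_self (exp_pos _).le (by nlinarith)

theorem integrableOn_log_one_add_mul_mul_exp_neg (ha : 0 ≤ a) (hc : 0 < c) :
    IntegrableOn (fun x => log (1 + a * x) * exp (-(c * x))) (Set.Ioi 0) := by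
  have hdom : IntegrableOn (fun x => a * (x ^ (1 : ℝ) * exp (-c * x ^ (1 : ℝ)))) (Set.Ioi 0) :=
    (integrableOn_rpow_mul_exp_neg_mul_rpow (by norm_num) one_pos hc).const_mul a
  refine Integrable.mono' hdom
    (by fun_prop : Measurable fun x => log (1 + a * x) * exp (-(c * x))).aestronglyMeasurable ?_
  filter_upwards [ae_restrict_mem measurableSet_Ioi] with x (hx : 0 < x)
  obtain ⟨hlog₀, hlog⟩ := log_one_add_mul_mem_Icc ha hx.le
  rw [norm_of_nonneg (by positivity), rpow_one, neg_mul, ← mul_assoc]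
  exact mul_le_mul_of_nonneg_right hlog (exp_pos _).le

theorem tendsto_log_one_add_mul_mul_exp_neg (ha : 0 ≤ a) (hc : 0 < c) :
    Tendsto (fun x => log (1 + a * x) * exp (-(c * x))) atTop (𝓝 0) := by
  have hdom : Tendsto (fun x => a * (x ^ (1 : ℝ) * exp (-c * x))) atTop (𝓝 0) := by
    simpa using (tendsto_rpow_mul_exp_neg_mul_atTop_nhds_zero 1 c hc).const_mul a
  refine squeeze_zero' ?_ ?_ hdom
  all_goals filter_upwards [eventually_ge_atTop 0] with x hx
  all_goals obtain ⟨hlog₀, hlog⟩ := log_one_add_mul_mem_Icc ha hx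
  · positivity
  · rw [rpow_one, neg_mul, ← mul_assoc]
    exact mul_le_mul_of_nonneg_right hlog (exp_pos _).le

theorem integral_log_one_add_mul_mul_exp_neg_eq (ha : 0 ≤ a) (hc : 0 < c) :
    ∫ x in Set.Ioi 0, log (1 + a * x) * exp (-(c * x))
      = a / c * ∫ x in Set.Ioi 0, exp (-(c * x)) / (1 + a * x) := by
  have hu : ∀ x ∈ Set.Ioi (0 : ℝ), HasDerivAt (fun y => log (1 + a * y)) (a / (1 + a * x)) x := by
    intro x (hx : 0 < x)
    simpa using (((hasDerivAt_id x).const_mul a).const_add 1).log (by positivity)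
  have hv : ∀ x ∈ Set.Ioi (0 : ℝ),
      HasDerivAt (fun y => -c⁻¹ * exp (-(c * y))) (exp (-(c * x))) x := by
    intro x _
    refine ((((hasDerivAt_id x).const_mul c).neg.exp).const_mul (-c⁻¹)).congr_deriv ?_
    simp only [Pi.neg_apply, id]
    field_simp
  have hu'v : ∀ x, a / (1 + a * x) * (-c⁻¹ * exp (-(c * x)))
      = -(a / c) * (exp (-(c * x)) / (1 + a * x)) := fun x => by ring
  have h_zero : Tendsto (fun x => log (1 + a * x) * (-c⁻¹ * exp (-(c * x)))) (𝓝[>] 0) (𝓝 0) := by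
    have : ContinuousAt (fun x => log (1 + a * x) * (-c⁻¹ * exp (-(c * x)))) 0 := by
      fun_prop (disch := norm_num)
    simpa using this.tendsto.mono_left nhdsWithin_le_nhds
  have h_infty : Tendsto (fun x => log (1 + a * x) * (-c⁻¹ * exp (-(c * x)))) atTop (𝓝 0) := by
    simpa [mul_left_comm] using (tendsto_log_one_add_mul_mul_exp_neg ha hc).const_mul (-c⁻¹)
  have ibp := integral_Ioi_mul_deriv_eq_deriv_mul hu hv
    (integrableOn_log_one_add_mul_mul_exp_neg ha hc)
    (by simp only [Pi.mul_def, hu'v]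
        exact (integrableOn_exp_neg_mul_div_one_add_mul ha hc).const_mul (-(a / c)))
    h_zero h_infty
  rw [ibp]
  simp only [hu'v, integral_const_mul]
  ring

theorem integral_log_one_add_mul_mul_exp_neg (ha : 0 < a) (hc : 0 < c) :
    ∫ x in Set.Ioi 0, log (1 + a * x) * exp (-(c * x)) = exp (c / a) * E1 (c / a) / c := by
  rw [integral_log_one_add_mul_mul_exp_neg_eq ha.le hc,
    integral_exp_neg_mul_div_one_add_mul ha.ne' hc]
  field_simp

end LogLaplace

theorem stmt_1_general (a : ℝ) (ha : 0 < a) (b : ℕ) :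
    ∫ x in Set.Ioi (0 : ℝ),
        (Real.log (1 + a * x) / Real.log 2) *
          deriv (fun y : ℝ => (1 - Real.exp (-y)) ^ b) x
      = ((b : ℝ) / Real.log 2) * ∑ ℓ ∈ Finset.range b,
          ((b - 1).choose ℓ : ℝ) * ((-1) ^ ℓ / ((ℓ : ℝ) + 1)) *
            Real.exp (((ℓ : ℝ) + 1) / a) * E1 (((ℓ : ℝ) + 1) / a) := by
  have hc : ∀ ℓ : ℕ, (0 : ℝ) < ℓ + 1 := fun ℓ => by positivity
  have hintegrand : ∀ x, log (1 + a * x) / log 2 * deriv (fun y => (1 - exp (-y)) ^ b) x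
      = ∑ ℓ ∈ range b, b / log 2 * (b - 1).choose ℓ * (-1) ^ ℓ *
          (log (1 + a * x) * exp (-((ℓ + 1) * x))) := fun x => by
    rw [(hasDerivAt_one_sub_exp_neg_pow b x).deriv, mul_sum]
    exact sum_congr rfl fun ℓ _ => by ring
  simp_rw [hintegrand]
  rw [integral_finsetSum _ fun ℓ _ =>
    (integrableOn_log_one_add_mul_mul_exp_neg ha.le (hc ℓ)).const_mul _, mul_sum]
  refine sum_congr rfl fun ℓ _ => ?_
  rw [integral_const_mul, integral_log_one_add_mul_mul_exp_neg ha (hc ℓ)]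
  ring

/-- `∫₀^∞ log₂(1+ax) d((1-e^{-x})^b)
    = (b/ln 2) ∑_{ℓ=0}^{b-1} C(b-1,ℓ) (-1)^ℓ/(ℓ+1) · e^{(ℓ+1)/a} E₁((ℓ+1)/a)`. -/
theorem stmt_1 (a : ℝ) (ha : 0 < a) (b : ℕ) (hb : 0 < b) :
    ∫ x in Set.Ioi (0 : ℝ),
        (Real.log (1 + a * x) / Real.log 2) *
          deriv (fun y : ℝ => (1 - Real.exp (-y)) ^ b) x
      = ((b : ℝ) / Real.log 2) * ∑ ℓ ∈ Finset.range b,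
          ((b - 1).choose ℓ : ℝ) * ((-1) ^ ℓ / ((ℓ : ℝ) + 1)) *
            Real.exp (((ℓ : ℝ) + 1) / a) * E1 (((ℓ : ℝ) + 1) / a) :=
  stmt_1_general a ha b
end

section
/- Let N, η_g, η_G, M be positive integers with η_g dividing η_G and (η_G/η_g)M ≤ N/η_g, and define ξ_g(m) = Σ_{i=m}^{(η_G/η_g)M - 1} ((η_G/η_g)M - i)/((η_G/η_g)M) · C(N/η_g, i) · C(i, m) · (-1)^{i-m} for 0 ≤ m ≤ (η_G/η_g)M - 1. Then Σ_{m=0}^{(η_G/η_g)M - 1} ξ_g(m) = 1. -/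
/-!
Exchanging the two sums, the coefficient of each `i` becomes the alternating binomial sum
`∑_{m ≤ i} C(i,m) (-1)^(i-m) = (1 - 1)^i`, which vanishes unless `i = 0`. Only the term `i = 0`
survives, and it equals `(M' - 0)/M' · C(n, 0) = 1`.
-/

open Finset

theorem sum_range_choose_mul_neg_one_pow_sub {R : Type*} [CommRing R] (i : ℕ) :
    ∑ m ∈ range (i + 1), (i.choose m : R) * (-1) ^ (i - m) = 0 ^ i := by
  rw [← add_neg_cancel (1 : R), add_pow]
  exact sum_congr rfl fun m _ => by ring

theorem sum_range_sum_Icc_mul_choose_mul_neg_one_pow {R : Type*} [CommRing R] (f : ℕ → R)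
    {K : ℕ} (hK : 0 < K) :
    ∑ m ∈ range K, ∑ i ∈ Icc m (K - 1), f i * (i.choose m : R) * (-1) ^ (i - m) = f 0 := by
  rw [sum_comm' (t' := range K) (s' := fun i => range (i + 1))
    (fun m i => by simp only [mem_range, mem_Icc]; omega)]
  have inner (i : ℕ) :
      ∑ m ∈ range (i + 1), f i * (i.choose m : R) * (-1) ^ (i - m) = f i * 0 ^ i := by
    simp only [mul_assoc, ← mul_sum, sum_range_choose_mul_neg_one_pow_sub]
  simp only [inner]
  rw [sum_eq_single_of_mem 0 (mem_range.mpr hK) fun i _ hi => by simp [zero_pow hi]]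
  simp

theorem stmt_3_general (N ηg ηG M : ℕ) (hηG : 0 < ηG) (hM : 0 < M)
    (hdvd : ηg ∣ ηG) :
    ∑ m ∈ Finset.range ((ηG / ηg) * M),
        (∑ i ∈ Finset.Icc m ((ηG / ηg) * M - 1),
          (((ηG / ηg) * M - i : ℝ) / ((ηG / ηg) * M : ℝ)) *
            ((N / ηg).choose i : ℝ) * (i.choose m : ℝ) * (-1) ^ (i - m)) = 1 := by
  have hηg : 0 < ηg := Nat.pos_of_dvd_of_pos hdvd hηG
  have hK : 0 < (ηG / ηg) * M := Nat.mul_pos (Nat.div_pos (Nat.le_of_dvd hηG hdvd) hηg) hM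
  rw [sum_range_sum_Icc_mul_choose_mul_neg_one_pow
    (fun i => ((ηG / ηg * M - i : ℝ) / (ηG / ηg * M : ℝ)) * ((N / ηg).choose i : ℝ)) hK]
  have : (ηG / ηg * M : ℝ) ≠ 0 := by positivity
  simp [this]

/-- The best-M feedback CDF coefficients sum to one.  With `M' = (η_G/η_g)·M` reported CQI
out of `n = N/η_g` subbands and
`ξ_g(m) = ∑_{i=m}^{M'-1} ((M'-i)/M') C(n,i) C(i,m) (-1)^{i-m}`, we have
`∑_{m=0}^{M'-1} ξ_g(m) = 1`. -/
theorem stmt_3 (N ηg ηG M : ℕ) (hηg : 0 < ηg) (hηG : 0 < ηG) (hM : 0 < M) (hN : 0 < N)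
    (hdvd : ηg ∣ ηG) (hle : (ηG / ηg) * M ≤ N / ηg) :
    ∑ m ∈ Finset.range ((ηG / ηg) * M),
        (∑ i ∈ Finset.Icc m ((ηG / ηg) * M - 1),
          (((ηG / ηg) * M - i : ℝ) / ((ηG / ηg) * M : ℝ)) *
            ((N / ηg).choose i : ℝ) * (i.choose m : ℝ) * (-1) ^ (i - m)) = 1 :=
  stmt_3_general N ηg ηG M hηG hM hdvd
end

section
/- For b > a ≥ 0, the first-order Marcum Q-function satisfies Q₁(a,b) ≤ exp(-(b-a)²/2). -/
open MeasureTheory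

/-- The zeroth-order modified Bessel function of the first kind,
`I₀(x) = ∑_{k≥0} (x/2)^{2k}/(k!)²`. -/
noncomputable def besselI0 (x : ℝ) : ℝ := ∑' k : ℕ, (x / 2) ^ (2 * k) / (Nat.factorial k) ^ 2

/-- The first-order Marcum Q-function
`Q₁(a,b) = ∫_b^∞ t exp(-(t²+a²)/2) I₀(at) dt`. -/
noncomputable def marcumQ1 (a b : ℝ) : ℝ :=
  ∫ t in Set.Ioi b, t * Real.exp (-(t ^ 2 + a ^ 2) / 2) * besselI0 (a * t)

/-!
Expanding `I₀` in its power series and integrating term by term turns each term into a Gaussian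
tail moment, `∫_b^∞ t (t²/2)^k/k! e^{-t²/2} dt = e^{-b²/2} ∑_{j ≤ k} (b²/2)^j/j!`, so
`Q₁(a,b) = e^{-(a²+b²)/2} ∑_k ∑_{j ≤ k} (a²/2)^k (b²/2)^j / (k! j!)`.
For `0 ≤ a ≤ b` and `j ≤ k` we have `(a²)^k (b²)^j ≤ (ab)^(k+j)`, so the double sum is at most
`(∑_n (ab/2)^n/n!)² = e^{ab}`, and `e^{-(a²+b²)/2 + ab} = e^{-(b-a)²/2}`.
-/

open Real Set Filter Topology
open scoped Nat

noncomputable def poissonCDF (y : ℝ) (k : ℕ) : ℝ :=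
  exp (-y) * ∑ j ∈ Finset.range (k + 1), y ^ j / j !

theorem hasDerivAt_poissonCDF (k : ℕ) (y : ℝ) :
    HasDerivAt (poissonCDF · k) (-(exp (-y) * (y ^ k / k !))) y := by
  induction k with
  | zero => simpa [poissonCDF] using (hasDerivAt_neg y).exp
  | succ k ih =>
    have hsplit : (poissonCDF · (k + 1)) =
        fun y => poissonCDF y k + exp (-y) * (y ^ (k + 1) / (k + 1)!) := by
      funext y
      simp only [poissonCDF, Finset.sum_range_succ _ (k + 1), mul_add]
    rw [hsplit]
    refine (ih.add ((hasDerivAt_neg y).exp.mul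
      ((hasDerivAt_pow (k + 1) y).div_const _))).congr_deriv ?_
    rw [Nat.factorial_succ]
    push_cast
    field_simp
    ring

theorem poissonCDF_le_one {y : ℝ} (hy : 0 ≤ y) (k : ℕ) : poissonCDF y k ≤ 1 :=
  calc poissonCDF y k ≤ exp (-y) * exp y := by
        unfold poissonCDF; gcongr; exact sum_le_exp_of_nonneg hy _
    _ = 1 := by rw [← exp_add, neg_add_cancel, exp_zero]

theorem tendsto_poissonCDF_atTop (k : ℕ) : Tendsto (poissonCDF · k) atTop (𝓝 0) := by
  have h : Tendsto (fun y => ∑ j ∈ Finset.range (k + 1), y ^ j * exp (-y) / j !) atTop (𝓝 0) := by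
    simpa using tendsto_finsetSum _ fun j _ =>
      (tendsto_pow_mul_exp_neg_atTop_nhds_zero j).div_const (j ! : ℝ)
  refine h.congr fun y => ?_
  simp only [poissonCDF, Finset.mul_sum]
  exact Finset.sum_congr rfl fun j _ => by ring

theorem integrable_pow_mul_exp_neg_mul_sq {c : ℝ} (hc : 0 < c) (n : ℕ) :
    Integrable fun x : ℝ => x ^ n * exp (-c * x ^ 2) := by
  simpa [rpow_natCast] using
    integrable_rpow_mul_exp_neg_mul_sq hc (s := n) (by linarith [n.cast_nonneg (α := ℝ)])

theorem integrable_mul_pow_div_factorial_mul_exp_neg_sq (k : ℕ) :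
    Integrable fun t : ℝ => t * ((t ^ 2 / 2) ^ k / k !) * exp (-(t ^ 2 / 2)) := by
  refine ((integrable_pow_mul_exp_neg_mul_sq one_half_pos (2 * k + 1)).const_mul
    (2 ^ k * k !)⁻¹).congr (Eventually.of_forall fun t => ?_)
  dsimp only
  rw [show -(1 / 2) * t ^ 2 = -(t ^ 2 / 2) by ring, div_pow, ← pow_mul]
  field_simp
  ring

theorem integral_Ioi_mul_pow_div_factorial_mul_exp_neg_sq (k : ℕ) (b : ℝ) :
    ∫ t in Ioi b, t * ((t ^ 2 / 2) ^ k / k !) * exp (-(t ^ 2 / 2)) = poissonCDF (b ^ 2 / 2) k := by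
  have hderiv (t : ℝ) : HasDerivAt (fun t => -poissonCDF (t ^ 2 / 2) k)
      (t * ((t ^ 2 / 2) ^ k / k !) * exp (-(t ^ 2 / 2))) t := by
    have hsq : HasDerivAt (fun t : ℝ => t ^ 2 / 2) t t := by
      simpa using (hasDerivAt_pow 2 t).div_const 2
    refine ((hasDerivAt_poissonCDF k _).comp t hsq).neg.congr_deriv ?_
    ring
  have hlim : Tendsto (fun t : ℝ => -poissonCDF (t ^ 2 / 2) k) atTop (𝓝 0) := by
    simpa using ((tendsto_poissonCDF_atTop k).comp
      ((tendsto_pow_atTop two_ne_zero).atTop_div_const two_pos)).neg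
  rw [integral_Ioi_of_hasDerivAt_of_tendsto' (fun t _ => hderiv t)
    (integrable_mul_pow_div_factorial_mul_exp_neg_sq k).integrableOn hlim]
  simp

theorem marcumQ1_integrand_eq_tsum (a t : ℝ) :
    t * exp (-(t ^ 2 + a ^ 2) / 2) * besselI0 (a * t) =
      ∑' k : ℕ, exp (-(a ^ 2 / 2)) * ((a ^ 2 / 2) ^ k / k !) *
        (t * ((t ^ 2 / 2) ^ k / k !) * exp (-(t ^ 2 / 2))) := by
  rw [besselI0, ← tsum_mul_left]
  refine tsum_congr fun k => ?_
  rw [show -(t ^ 2 + a ^ 2) / 2 = -(a ^ 2 / 2) + -(t ^ 2 / 2) by ring, exp_add, pow_mul,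
    show (a * t / 2) ^ 2 = a ^ 2 / 2 * (t ^ 2 / 2) by ring, mul_pow]
  field_simp

theorem hasSum_marcumQ1 (a : ℝ) {b : ℝ} (hb : 0 ≤ b) :
    HasSum (fun k : ℕ => exp (-(a ^ 2 / 2)) * ((a ^ 2 / 2) ^ k / k !) * poissonCDF (b ^ 2 / 2) k)
      (marcumQ1 a b) := by
  set c : ℕ → ℝ := fun k => exp (-(a ^ 2 / 2)) * ((a ^ 2 / 2) ^ k / k !)
  have hc_nonneg (k : ℕ) : 0 ≤ c k := by positivity
  set F : ℕ → ℝ → ℝ := fun k t => c k * (t * ((t ^ 2 / 2) ^ k / k !) * exp (-(t ^ 2 / 2)))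
  have hF_int (k : ℕ) : Integrable (F k) (volume.restrict (Ioi b)) :=
    ((integrable_mul_pow_div_factorial_mul_exp_neg_sq k).const_mul (c k)).integrableOn
  have hF_integral (k : ℕ) : ∫ t in Ioi b, F k t = c k * poissonCDF (b ^ 2 / 2) k := by
    rw [integral_const_mul, integral_Ioi_mul_pow_div_factorial_mul_exp_neg_sq]
  have hF_norm (k : ℕ) : ∫ t in Ioi b, ‖F k t‖ = ∫ t in Ioi b, F k t :=
    setIntegral_congr_fun measurableSet_Ioi fun t ht =>
      norm_of_nonneg (by have : 0 < t := hb.trans_lt ht; positivity)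
  have hsummable : Summable fun k => c k * poissonCDF (b ^ 2 / 2) k := by
    refine Summable.of_nonneg_of_le (fun k => ?_) (fun k => ?_)
      ((summable_pow_div_factorial (a ^ 2 / 2)).mul_left (exp (-(a ^ 2 / 2))))
    · unfold poissonCDF; positivity
    · exact mul_le_of_le_one_right (hc_nonneg k) (poissonCDF_le_one (by positivity) k)
  have h := hasSum_integral_of_summable_integral_norm hF_int
    (by simpa only [hF_norm, hF_integral] using hsummable)
  simp only [hF_integral] at h
  have hQ : marcumQ1 a b = ∫ t in Ioi b, ∑' k, F k t :=
    integral_congr_ae (Eventually.of_forall fun t => marcumQ1_integrand_eq_tsum a t)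
  rwa [hQ]

theorem pow_mul_pow_le_of_mul_eq {R : Type*} [CommSemiring R] [PartialOrder R] [IsOrderedRing R]
    {x y u : R} (hx : 0 ≤ x) (hxu : x ≤ u) (hxy : x * y = u * u) {j k : ℕ} (hjk : j ≤ k) :
    x ^ k * y ^ j ≤ u ^ k * u ^ j := by
  obtain ⟨d, rfl⟩ := Nat.exists_eq_add_of_le hjk
  calc x ^ (j + d) * y ^ j = (x * y) ^ j * x ^ d := by ring
    _ = (u * u) ^ j * x ^ d := by rw [hxy]
    _ ≤ (u * u) ^ j * u ^ d := by have := hx.trans hxu; gcongr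
    _ = u ^ (j + d) * u ^ j := by ring

theorem marcumQ1_term_le {a b : ℝ} (ha : 0 ≤ a) (hab : a ≤ b) (k : ℕ) :
    exp (-(a ^ 2 / 2)) * ((a ^ 2 / 2) ^ k / k !) * poissonCDF (b ^ 2 / 2) k ≤
      exp (-(a ^ 2 + b ^ 2) / 2 + a * b / 2) * ((a * b / 2) ^ k / k !) := by
  have hu : 0 ≤ a * b / 2 := by have := ha.trans hab; positivity
  have hterm (j : ℕ) (hjk : j ≤ k) :
      (a ^ 2 / 2) ^ k * (b ^ 2 / 2) ^ j ≤ (a * b / 2) ^ k * (a * b / 2) ^ j :=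
    pow_mul_pow_le_of_mul_eq (by positivity) (by nlinarith) (by ring) hjk
  calc exp (-(a ^ 2 / 2)) * ((a ^ 2 / 2) ^ k / k !) * poissonCDF (b ^ 2 / 2) k
      = exp (-(a ^ 2 + b ^ 2) / 2) * ∑ j ∈ Finset.range (k + 1),
          (a ^ 2 / 2) ^ k * (b ^ 2 / 2) ^ j / (k ! * j !) := by
        rw [poissonCDF, Finset.mul_sum, Finset.mul_sum, Finset.mul_sum]
        refine Finset.sum_congr rfl fun j _ => ?_
        rw [show -(a ^ 2 + b ^ 2) / 2 = -(a ^ 2 / 2) + -(b ^ 2 / 2) by ring, exp_add]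
        ring
    _ ≤ exp (-(a ^ 2 + b ^ 2) / 2) * ∑ j ∈ Finset.range (k + 1),
          (a * b / 2) ^ k * (a * b / 2) ^ j / (k ! * j !) := by
        gcongr ?_ * ∑ j ∈ _, ?_ / _ with j hj
        exact hterm j (Finset.mem_range_succ_iff.mp hj)
    _ = exp (-(a ^ 2 + b ^ 2) / 2) * ((a * b / 2) ^ k / k ! *
          ∑ j ∈ Finset.range (k + 1), (a * b / 2) ^ j / j !) := by
        congr 1
        rw [Finset.mul_sum]
        exact Finset.sum_congr rfl fun j _ => by ring
    _ ≤ exp (-(a ^ 2 + b ^ 2) / 2) * ((a * b / 2) ^ k / k ! * exp (a * b / 2)) := by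
        gcongr
        exact sum_le_exp_of_nonneg hu _
    _ = exp (-(a ^ 2 + b ^ 2) / 2 + a * b / 2) * ((a * b / 2) ^ k / k !) := by
        rw [exp_add]
        ring

/-- For `b > a ≥ 0`, `Q₁(a,b) ≤ exp(-(b-a)²/2)`. -/
theorem stmt_10 (a b : ℝ) (ha : 0 ≤ a) (hab : a < b) :
    marcumQ1 a b ≤ Real.exp (-(b - a) ^ 2 / 2) := by
  set C := exp (-(a ^ 2 + b ^ 2) / 2 + a * b / 2)
  have hexp : HasSum (fun k : ℕ => C * ((a * b / 2) ^ k / k !)) (C * exp (a * b / 2)) := by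
    rw [exp_eq_exp_ℝ]
    exact (NormedSpace.expSeries_div_hasSum_exp (a * b / 2)).mul_left C
  calc marcumQ1 a b ≤ C * exp (a * b / 2) :=
        hasSum_le (marcumQ1_term_le ha hab.le) (hasSum_marcumQ1 a (ha.trans hab.le)) hexp
    _ = exp (-(b - a) ^ 2 / 2) := by
        rw [← exp_add]
        ring_nf
end
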